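/- Let d ≥ 1 and let N be a natural number with N > d. There exists a constant C > 0 such that for all n, k ∈ ℤ^d one has ∑_{m ∈ ℤ^d} 1 / ((1 + ‖n−m‖^N)(1 + ‖k−m‖^N)) ≤ C / (1 + ‖n−k‖^N). -/

import Mathlib

/-!
For every lattice point `m`, one of `‖n - m‖`, `‖k - m‖` is at least `‖n - k‖ / 2`, so
`(1 + ‖n - m‖^N)⁻¹ (1 + ‖k - m‖^N)⁻¹ ≤ 2^N (1 + ‖n - k‖^N)⁻¹ ((1 + ‖n - m‖^N)⁻¹ + (1 + ‖k - m‖^N)⁻¹)`.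
Summing over `m` gives the bound with `C = 2^(N+1) ∑ₘ (1 + ‖m‖^N)⁻¹`, which is finite because
`∑ ‖m‖^(-N)` converges over a lattice of rank `d < N`.
-/

/-- The lattice point `m ∈ ℤ^d` viewed as a point of `ℝ^d`. -/
noncomputable def latt (d : ℕ) (m : Fin d → ℤ) : EuclideanSpace ℝ (Fin d) :=
  WithLp.toLp 2 (fun i => (m i : ℝ))

open Module Filter

section Lattice
variable {d : ℕ}

lemma latt_sub (n m : Fin d → ℤ) : latt d (n - m) = latt d n - latt d m := by
  ext i
  simp [latt]

lemma latt_injective : Function.Injective (latt d) := by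
  intro m m' h
  funext i
  simpa [latt] using congrArg (· i) h

variable (d) in
abbrev stdLattice : Submodule ℤ (EuclideanSpace ℝ (Fin d)) :=
  Submodule.span ℤ (Set.range (EuclideanSpace.basisFun (Fin d) ℝ).toBasis)

lemma finrank_stdLattice : finrank ℤ (stdLattice d) = d := by
  rw [finrank_span_eq_card
    ((EuclideanSpace.basisFun (Fin d) ℝ).toBasis.linearIndependent.restrict_scalars' ℤ)]
  simp

lemma latt_mem_stdLattice (m : Fin d → ℤ) : latt d m ∈ stdLattice d := by
  have : latt d m = ∑ i, m i • (EuclideanSpace.basisFun (Fin d) ℝ).toBasis i := by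
    ext j
    simp [latt, Pi.single_apply]
  rw [this]
  exact Submodule.sum_mem _ fun i _ => Submodule.smul_mem _ _ (Submodule.subset_span ⟨i, rfl⟩)

lemma summable_norm_latt_inv_pow {N : ℕ} (hN : d < N) :
    Summable fun m : Fin d → ℤ => ‖latt d m‖⁻¹ ^ N := by
  have hN' : finrank ℤ (stdLattice d) < N := by rwa [finrank_stdLattice]
  have hL := ZLattice.summable_norm_pow_inv (stdLattice d) N hN'
  have hi : Function.Injective fun m : Fin d → ℤ =>
      (⟨latt d m, latt_mem_stdLattice m⟩ : stdLattice d) :=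
    fun m m' h => latt_injective (congrArg Subtype.val h)
  exact (hL.comp_injective hi :)

lemma summable_one_div_one_add_norm_latt_pow {N : ℕ} (hN : d < N) :
    Summable fun m : Fin d → ℤ => 1 / (1 + ‖latt d m‖ ^ N) := by
  refine (summable_norm_latt_inv_pow hN).of_norm_bounded_eventually ?_
  filter_upwards [(Set.finite_singleton 0).compl_mem_cofinite] with m hm
  have hpos : 0 < ‖latt d m‖ :=
    norm_pos_iff.2 fun h => hm (latt_injective (h.trans (by ext; simp [latt])))
  rw [Real.norm_of_nonneg (by positivity), inv_pow, one_div]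
  exact inv_anti₀ (by positivity) (le_add_of_nonneg_left zero_le_one)

lemma summable_one_div_one_add_norm_sub_latt_pow {N : ℕ} (hN : d < N) (n : Fin d → ℤ) :
    Summable fun m : Fin d → ℤ => 1 / (1 + ‖latt d n - latt d m‖ ^ N) := by
  simpa [Function.comp_def, latt_sub] using
    (summable_one_div_one_add_norm_latt_pow hN).comp_injective (Equiv.subLeft n).injective

lemma tsum_one_div_one_add_norm_sub_latt_pow (N : ℕ) (n : Fin d → ℤ) :
    ∑' m : Fin d → ℤ, 1 / (1 + ‖latt d n - latt d m‖ ^ N) =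
      ∑' m : Fin d → ℤ, 1 / (1 + ‖latt d m‖ ^ N) := by
  simpa [latt_sub] using (Equiv.subLeft n).tsum_eq fun m => 1 / (1 + ‖latt d m‖ ^ N)

end Lattice

lemma one_add_pow_le_two_pow_mul {r x : ℝ} (N : ℕ) (hr : 0 ≤ r) (h : r ≤ 2 * x) :
    1 + r ^ N ≤ 2 ^ N * (1 + x ^ N) := by
  have : r ^ N ≤ 2 ^ N * x ^ N := mul_pow (2 : ℝ) x N ▸ pow_le_pow_left₀ hr h N
  nlinarith [one_le_pow₀ (M₀ := ℝ) (n := N) one_le_two]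

lemma one_div_mul_one_add_pow_le {a b r : ℝ} (N : ℕ) (ha : 0 ≤ a) (hb : 0 ≤ b) (hr : 0 ≤ r)
    (h : r ≤ a + b) :
    1 / ((1 + a ^ N) * (1 + b ^ N)) ≤
      2 ^ N / (1 + r ^ N) * (1 / (1 + a ^ N) + 1 / (1 + b ^ N)) := by
  wlog hba : b ≤ a generalizing a b
  · simpa only [mul_comm, add_comm] using this hb ha (by linarith) (by linarith)
  have hfar : 1 / (1 + a ^ N) ≤ 2 ^ N / (1 + r ^ N) := by
    rw [div_le_div_iff₀ (by positivity) (by positivity), one_mul]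
    exact one_add_pow_le_two_pow_mul N hr (by linarith)
  calc 1 / ((1 + a ^ N) * (1 + b ^ N)) = 1 / (1 + a ^ N) * (1 / (1 + b ^ N)) := by
        rw [one_div_mul_one_div]
    _ ≤ 2 ^ N / (1 + r ^ N) * (1 / (1 + b ^ N)) := by gcongr
    _ ≤ 2 ^ N / (1 + r ^ N) * (1 / (1 + a ^ N) + 1 / (1 + b ^ N)) := by
        gcongr
        exact le_add_of_nonneg_left (by positivity)

theorem stmt2_general (d N : ℕ) (hN : d < N) :
    ∃ C > (0 : ℝ), ∀ n k : Fin d → ℤ,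
      Summable (fun m : Fin d → ℤ =>
        1 / ((1 + ‖latt d n - latt d m‖ ^ N) * (1 + ‖latt d k - latt d m‖ ^ N))) ∧
      (∑' m : Fin d → ℤ,
        1 / ((1 + ‖latt d n - latt d m‖ ^ N) * (1 + ‖latt d k - latt d m‖ ^ N)))
        ≤ C / (1 + ‖latt d n - latt d k‖ ^ N) := by
  set S := ∑' m : Fin d → ℤ, 1 / (1 + ‖latt d m‖ ^ N)
  have hS : 0 < S := (summable_one_div_one_add_norm_latt_pow hN).tsum_pos
    (fun _ => by positivity) 0 (by positivity)
  refine ⟨2 ^ N * (2 * S), by positivity, fun n k => ?_⟩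
  set w := fun x m => 1 / (1 + ‖latt d x - latt d m‖ ^ N)
  have hw : ∀ x, Summable (w x) := summable_one_div_one_add_norm_sub_latt_pow hN
  have hbound : ∀ m, 1 / ((1 + ‖latt d n - latt d m‖ ^ N) * (1 + ‖latt d k - latt d m‖ ^ N)) ≤
      2 ^ N / (1 + ‖latt d n - latt d k‖ ^ N) * (w n m + w k m) := fun m =>
    one_div_mul_one_add_pow_le N (norm_nonneg _) (norm_nonneg _) (norm_nonneg _)
      (norm_sub_rev (latt d k) (latt d m) ▸ norm_sub_le_norm_sub_add_norm_sub _ _ _)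
  have hdom := ((hw n).add (hw k)).mul_left (2 ^ N / (1 + ‖latt d n - latt d k‖ ^ N))
  have hsum := hdom.of_nonneg_of_le (fun _ => by positivity) hbound
  refine ⟨hsum, (hsum.tsum_le_tsum hbound hdom).trans_eq ?_⟩
  rw [tsum_mul_left, (hw n).tsum_add (hw k), tsum_one_div_one_add_norm_sub_latt_pow,
    tsum_one_div_one_add_norm_sub_latt_pow]
  ring

theorem stmt2 (d N : ℕ) (hd : 1 ≤ d) (hN : d < N) :
    ∃ C > (0 : ℝ), ∀ n k : Fin d → ℤ,
      Summable (fun m : Fin d → ℤ =>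
        1 / ((1 + ‖latt d n - latt d m‖ ^ N) * (1 + ‖latt d k - latt d m‖ ^ N))) ∧
      (∑' m : Fin d → ℤ,
        1 / ((1 + ‖latt d n - latt d m‖ ^ N) * (1 + ‖latt d k - latt d m‖ ^ N)))
        ≤ C / (1 + ‖latt d n - latt d k‖ ^ N) :=
  stmt2_general d N hN
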